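/- arXiv:2001.06671 — 2 statements merged into one kernel-verified Lean document; each statement's English description precedes it below -/
import Mathlib

section
/- In the generalized quaternion group H_{2^n} with n ≥ 3, the central element -1 = x^{2^{n-2}} has exactly 2^{n-1} + 2 square roots, while the identity element has exactly 2 square roots. -/
/-!
Every element of `QuaternionGroup N` is `a i` or `xa i`. Each of the `2 * N` elements `xa i` squares
to the central involution `a N`, while `a i` squares to `a (i + i)`, and in `ZMod (2 * N)` the
equation `i + i = s + s` has exactly the two solutions `s` and `s + N`. Since `N` is even, `a N` is
such a double, and so is `1 = a 0`.
-/

theorem Nat.card_add_self_eq_add_self {G : Type*} [AddCommGroup G] (s : G) :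
    Nat.card {x : G // x + x = s + s} = Nat.card {x : G // x + x = 0} :=
  Nat.card_congr <| (Equiv.subRight s).subtypeEquiv fun x => by
    rw [Equiv.subRight_apply, show x - s + (x - s) = x + x - (s + s) by abel, sub_eq_zero]

namespace ZMod

theorem add_self_eq_zero_iff_of_two_mul {N : ℕ} [NeZero N] {x : ZMod (2 * N)} :
    x + x = 0 ↔ x = 0 ∨ x = N := by
  constructor
  · intro h
    rw [← natCast_zmod_val x, ← Nat.cast_add, natCast_eq_zero_iff] at h
    have hlt : x.val < 2 * N := val_lt x
    obtain ⟨k, hk⟩ : N ∣ x.val :=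
      (Nat.mul_dvd_mul_iff_left two_pos).mp (by rwa [two_mul x.val])
    have hk2 : k < 2 := by nlinarith
    interval_cases k
    · left; rw [← natCast_zmod_val x, hk]; simp
    · right; rw [← natCast_zmod_val x, hk, mul_one]
  · rintro (rfl | rfl)
    · simp
    · rw [← Nat.cast_add, natCast_eq_zero_iff, two_mul]

theorem natCast_ne_zero_of_two_mul (N : ℕ) [NeZero N] : (N : ZMod (2 * N)) ≠ 0 := by
  have hN : 0 < N := Nat.pos_of_neZero N
  rw [Ne, natCast_eq_zero_iff]
  exact fun h => absurd (Nat.le_of_dvd hN h) (by omega)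

theorem card_add_self_eq_zero_of_two_mul (N : ℕ) [NeZero N] :
    Nat.card {x : ZMod (2 * N) // x + x = 0} = 2 := by
  have hroots : {x : ZMod (2 * N) | x + x = 0} = {0, (N : ZMod (2 * N))} := by
    ext x; exact add_self_eq_zero_iff_of_two_mul
  change Nat.card {x : ZMod (2 * N) | x + x = 0} = 2
  rw [hroots, Nat.card_coe_set_eq, Set.ncard_pair (natCast_ne_zero_of_two_mul N).symm]

end ZMod

namespace QuaternionGroup

variable {N : ℕ}

def subtypeEquivSum (p : QuaternionGroup N → Prop) :
    {g // p g} ≃ {i : ZMod (2 * N) // p (a i)} ⊕ {i : ZMod (2 * N) // p (xa i)} where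
  toFun
    | ⟨a i, h⟩ => .inl ⟨i, h⟩
    | ⟨xa i, h⟩ => .inr ⟨i, h⟩
  invFun := Sum.elim (fun i => ⟨a i.1, i.2⟩) (fun i => ⟨xa i.1, i.2⟩)
  left_inv := by rintro ⟨i | i, h⟩ <;> rfl
  right_inv := by rintro (⟨i, h⟩ | ⟨i, h⟩) <;> rfl

theorem card_sq_eq [NeZero N] (c : QuaternionGroup N) :
    Nat.card {g // g ^ 2 = c} =
      Nat.card {i : ZMod (2 * N) // a i ^ 2 = c} + Nat.card {i : ZMod (2 * N) // xa i ^ 2 = c} := by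
  rw [Nat.card_congr (subtypeEquivSum _), Nat.card_sum]

theorem card_a_sq_eq_a_add_self [NeZero N] (s : ZMod (2 * N)) :
    Nat.card {i : ZMod (2 * N) // (a i : QuaternionGroup N) ^ 2 = a (s + s)} = 2 := by
  simp only [sq, a_mul_a, a.injEq]
  rw [Nat.card_add_self_eq_add_self, ZMod.card_add_self_eq_zero_of_two_mul]

theorem card_xa_sq_eq_a_n :
    Nat.card {i : ZMod (2 * N) // (xa i : QuaternionGroup N) ^ 2 = a N} = 2 * N := by
  simp [xa_sq]

theorem card_xa_sq_eq_one [NeZero N] :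
    Nat.card {i : ZMod (2 * N) // (xa i : QuaternionGroup N) ^ 2 = 1} = 0 := by
  simp [xa_sq, ← a_zero, ZMod.natCast_ne_zero_of_two_mul]

theorem card_sq_eq_a_n [NeZero N] (hN : Even N) :
    Nat.card {g : QuaternionGroup N // g ^ 2 = a N} = 2 * N + 2 := by
  obtain ⟨m, rfl⟩ := hN
  rw [card_sq_eq, card_xa_sq_eq_a_n, Nat.cast_add, card_a_sq_eq_a_add_self, add_comm]

theorem card_sq_eq_one [NeZero N] : Nat.card {g : QuaternionGroup N // g ^ 2 = 1} = 2 := by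
  rw [card_sq_eq, card_xa_sq_eq_one, one_def, ← add_zero 0, card_a_sq_eq_a_add_self]

end QuaternionGroup

/-- In `H_{2^n} = QuaternionGroup (2^(n-2))` with `n ≥ 3`, the central element
`-1 = x^(2^(n-2))` has exactly `2^(n-1) + 2` square roots, while the identity has exactly `2`. -/
theorem stmt2 (n N : ℕ) (hn : 3 ≤ n) (hN : N = 2 ^ (n - 2)) [NeZero N] :
    Nat.card {g : QuaternionGroup N //
        g ^ 2 = (QuaternionGroup.a 1 : QuaternionGroup N) ^ N} = 2 ^ (n - 1) + 2 ∧
    Nat.card {g : QuaternionGroup N // g ^ 2 = 1} = 2 := by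
  have hN_even : Even N := hN ▸ (Nat.even_pow' (by omega)).mpr even_two
  have h2N : 2 ^ (n - 1) = 2 * N := by rw [hN, ← pow_succ']; congr 1; omega
  rw [QuaternionGroup.a_one_pow, QuaternionGroup.card_sq_eq_a_n hN_even, h2N]
  exact ⟨rfl, QuaternionGroup.card_sq_eq_one⟩
end

section
/- Let M/L be a number field extension of the form M = L(√η) where η is a unit of the ring of integers of L. Then |d_M|^{1/[M:ℚ]} ≤ 2 |d_L|^{1/[L:ℚ]}, where d_M and d_L denote the absolute discriminants. -/
/-!
The square root `α` of the unit `η` is an integral unit and a root of `X ^ 2 - η ∈ 𝓞_L[X]`,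
so the derivative `2α` of that polynomial lies in the different of `𝓞_M / 𝓞_L`, and hence so
does `2`. The different then has absolute norm at most `2 ^ [M:ℚ]`, and the tower formula
`|d_M| = N(𝔇_{M/L}) · |d_L| ^ [M:L]` gives `|d_M| ≤ 2 ^ [M:ℚ] · |d_L| ^ [M:L]`; taking
`[M:ℚ]`-th roots yields the bound on root discriminants.
-/

open NumberField Polynomial Module

theorem aeval_derivative_mem_differentIdeal_of_aeval_eq_zero (A K L : Type*) {B : Type*}
    [CommRing A] [Field K] [CommRing B] [Field L] [Algebra A K] [Algebra B L] [Algebra A B]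
    [Algebra K L] [Algebra A L] [IsScalarTower A K L] [IsScalarTower A B L] [IsDomain A]
    [IsFractionRing A K] [FiniteDimensional K L] [Algebra.IsSeparable K L]
    [IsIntegralClosure B A L] [IsIntegrallyClosed A] [IsDedekindDomain B] [IsTorsionFree A B]
    {x : B} (hx : Algebra.adjoin K {algebraMap B L x} = ⊤) {p : A[X]} (hp : aeval x p = 0) :
    aeval x (derivative p) ∈ differentIdeal A B := by
  obtain ⟨q, rfl⟩ := minpoly.isIntegrallyClosed_dvd (IsIntegralClosure.isIntegral A L x) hp
  rw [derivative_mul, map_add, map_mul, map_mul, minpoly.aeval, zero_mul, add_zero]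
  exact Ideal.mul_mem_right _ _ (aeval_derivative_mem_differentIdeal A K L x hx)

namespace NumberField

variable {L M : Type*} [Field L] [Field M] [NumberField L] [NumberField M] [Algebra L M]

theorem natAbs_discr_le_of_natCast_mem_differentIdeal {n : ℕ} (hn : n ≠ 0)
    (h : (n : 𝓞 M) ∈ differentIdeal (𝓞 L) (𝓞 M)) :
    (discr M).natAbs ≤ n ^ finrank ℚ M * (discr L).natAbs ^ finrank L M := by
  rw [natAbs_discr_eq_absNorm_differentIdeal_mul_natAbs_discr_pow L (𝓞 L) M (𝓞 M)]
  refine Nat.mul_le_mul_right _ (Nat.le_of_dvd (by positivity) ?_)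
  rw [← RingOfIntegers.rank, ← Ideal.absNorm_span_natCast]
  exact Ideal.absNorm_dvd_absNorm_of_le ((Ideal.span_singleton_le_iff_mem _).mpr h)

theorem rootDiscr_le_of_natCast_mem_differentIdeal {n : ℕ} (hn : n ≠ 0)
    (h : (n : 𝓞 M) ∈ differentIdeal (𝓞 L) (𝓞 M)) :
    rootDiscr M ≤ n * rootDiscr L := by
  have hdiscr : |(discr M : ℝ)| ≤ n ^ finrank ℚ M * |(discr L : ℝ)| ^ finrank L M := by
    have := (Nat.cast_le (α := ℝ)).mpr (natAbs_discr_le_of_natCast_mem_differentIdeal hn h)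
    push_cast [Nat.cast_natAbs, Int.cast_abs] at this
    exact this
  have hM : (finrank ℚ M : ℝ) = finrank ℚ L * finrank L M := by
    exact_mod_cast (finrank_mul_finrank ℚ L M).symm
  have hL : (finrank ℚ L : ℝ) ≠ 0 := by exact_mod_cast finrank_pos.ne'
  have hM0 : (finrank ℚ M : ℝ) ≠ 0 := by exact_mod_cast finrank_pos.ne'
  have hLM : (finrank L M : ℝ) ≠ 0 := by exact_mod_cast finrank_pos.ne'
  rw [rootDiscr_def, rootDiscr_def, Int.cast_abs, Int.cast_abs]
  calc |(discr M : ℝ)| ^ (finrank ℚ M : ℝ)⁻¹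
      ≤ ((n : ℝ) ^ finrank ℚ M * |(discr L : ℝ)| ^ finrank L M) ^ (finrank ℚ M : ℝ)⁻¹ := by
        gcongr
    _ = n * |(discr L : ℝ)| ^ (finrank ℚ L : ℝ)⁻¹ := by
        rw [Real.mul_rpow (by positivity) (by positivity), ← Real.rpow_natCast,
          ← Real.rpow_natCast, ← Real.rpow_mul (by positivity),
          ← Real.rpow_mul (by positivity), mul_inv_cancel₀ hM0, Real.rpow_one, hM]
        congr 2
        field_simp

theorem two_mem_differentIdeal_of_sq_eq_unit (η : (𝓞 L)ˣ) {a : 𝓞 M}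
    (ha : a ^ 2 = algebraMap (𝓞 L) (𝓞 M) η) (hadj : Algebra.adjoin L {algebraMap (𝓞 M) M a} = ⊤) :
    (2 : 𝓞 M) ∈ differentIdeal (𝓞 L) (𝓞 M) := by
  have hroot : aeval a (X ^ 2 - C (η : 𝓞 L)) = 0 := by simp [ha]
  have hmem : 2 * a ∈ differentIdeal (𝓞 L) (𝓞 M) := by
    simpa [one_add_one_eq_two, map_ofNat] using
      aeval_derivative_mem_differentIdeal_of_aeval_eq_zero (𝓞 L) L M hadj hroot
  have hunit : IsUnit a := (isUnit_pow_iff two_ne_zero).mp (ha ▸ η.isUnit.map _)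
  exact (Ideal.mul_unit_mem_iff_mem _ hunit).mp hmem

end NumberField

/-- Let `M = L(√η)` with `η` a unit of the ring of integers of the number field `L`. Then
`|d_M|^(1/[M:ℚ]) ≤ 2 |d_L|^(1/[L:ℚ])`. -/
theorem stmt18 (L M : Type*) [Field L] [Field M] [NumberField L] [NumberField M]
    [Algebra L M] (η : (𝓞 L)ˣ) (α : M)
    (hα : α ^ 2 = algebraMap L M (algebraMap (𝓞 L) L (η : 𝓞 L)))
    (hadj : Algebra.adjoin L {α} = ⊤) :
    (|(NumberField.discr M : ℝ)|) ^ ((Module.finrank ℚ M : ℝ)⁻¹) ≤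
      2 * (|(NumberField.discr L : ℝ)|) ^ ((Module.finrank ℚ L : ℝ)⁻¹) := by
  have hαint : IsIntegral ℤ α := by
    refine .of_pow two_pos ?_
    rw [hα]
    exact (η : 𝓞 L).isIntegral_coe.map (IsScalarTower.toAlgHom ℤ L M)
  let a : 𝓞 M := ⟨α, hαint⟩
  have ha : a ^ 2 = algebraMap (𝓞 L) (𝓞 M) η := RingOfIntegers.ext hα
  have h2 := rootDiscr_le_of_natCast_mem_differentIdeal two_ne_zero
    (by exact_mod_cast two_mem_differentIdeal_of_sq_eq_unit η ha hadj)
  simpa [rootDiscr_def] using h2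
end
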